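/- Let R = (G,Φ,Φ⁺) be a finite, faithful, complete signed groupoid set. Given x, y ∈ ₐG with Φ_x ∩ Φ_y = ∅, there exists a unique morphism y' ∈ ₐG such that: y ≤ y' in weak order, (x, w', y', z') is a square for some w', z', and for every square (x, w'', y'', z'') with y ≤ y'' one has y' ≤ y''. -/

import Mathlib

open CategoryTheory

universe u v

/-- A signed groupoid set: a groupoid `G` acting on a family of definitely involuted
sets `R a` (`a ∈ Ob G`), with involution `neg`, positive parts `pos a`, and the action
commuting with the involution. -/
structure SGS (G : Type u) [Groupoid G] (R : G → Type v) where
  neg : ∀ {a : G}, R a → R a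
  pos : ∀ a : G, Set (R a)
  act : ∀ {a b : G}, (b ⟶ a) → R b → R a
  neg_neg : ∀ {a : G} (x : R a), neg (neg x) = x
  pos_iff : ∀ {a : G} (x : R a), x ∈ pos a ↔ neg x ∉ pos a
  act_id : ∀ {a : G} (x : R a), act (𝟙 a) x = x
  act_comp : ∀ {a b c : G} (g : c ⟶ b) (f : b ⟶ a) (x : R c),
      act f (act g x) = act (g ≫ f) x
  act_neg : ∀ {a b : G} (f : b ⟶ a) (x : R b), act f (neg x) = neg (act f x)

/-- The morphisms of `G` with codomain `a`. -/
abbrev SHoms (G : Type u) [Groupoid G] (a : G) : Type _ := Σ b : G, (b ⟶ a)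

namespace SGS

variable {G : Type u} [Groupoid G] {R : G → Type v} (S : SGS G R)

/-- The inversion set of a morphism `f : b ⟶ a`: positive roots at `a` sent to
negative roots at `b` by `f⁻¹`. -/
def Phi {a b : G} (f : b ⟶ a) : Set (R a) :=
  {α | α ∈ S.pos a ∧ S.act (Groupoid.inv f) α ∉ S.pos b}

/-- The inversion set of an element of `SHoms G a`. -/
def PhiS {a : G} (g : SHoms G a) : Set (R a) := S.Phi g.2

/-- `S` is faithful if only identity morphisms have empty inversion set. -/
def Faithful : Prop :=
  ∀ ⦃a b : G⦄ (f : b ⟶ a), S.Phi f = ∅ → ∃ h : b = a, f = eqToHom h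

/-- `j` is an upper bound of `F` in the weak order at `a`. -/
def IsUB {a : G} (F : Set (SHoms G a)) (j : SHoms G a) : Prop :=
  ∀ g ∈ F, S.PhiS g ⊆ S.PhiS j

/-- `j` is a least upper bound of `F` in the weak order at `a`. -/
def IsLUBw {a : G} (F : Set (SHoms G a)) (j : SHoms G a) : Prop :=
  S.IsUB F j ∧ ∀ k : SHoms G a, S.IsUB F k → S.PhiS j ⊆ S.PhiS k

/-- `S` is complete: the weak order at every object is a complete lattice
(equivalently, every family of morphisms with a common codomain has a join). -/
def Complete : Prop := ∀ (a : G) (F : Set (SHoms G a)), ∃ j : SHoms G a, S.IsLUBw F j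

/-- `S` is finite: finitely many objects, morphisms and roots. -/
def FiniteSGS (_S : SGS G R) : Prop :=
  Finite G ∧ (∀ a b : G, Finite (a ⟶ b)) ∧ ∀ a : G, Finite (R a)

/-- A square `(x, w, y, z)`: a commuting square `xw = yz` with `x(Φ_w) = Φ_y`. -/
def Square {a b c d : G} (x : b ⟶ d) (w : a ⟶ b) (y : c ⟶ d) (z : a ⟶ c) : Prop :=
  w ≫ x = z ≫ y ∧ S.act x '' S.Phi w = S.Phi y

/-- The positive real roots at `a`: the union of all inversion sets at `a`. -/
def posRe (a : G) : Set (R a) := ⋃ g : SHoms G a, S.PhiS g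

/-- An atomic morphism: an atom of the weak order at its codomain. -/
def Atomic {a : G} (g : SHoms G a) : Prop :=
  S.PhiS g ≠ ∅ ∧ ∀ h : SHoms G a, S.PhiS h ⊆ S.PhiS g →
    S.PhiS h = ∅ ∨ S.PhiS h = S.PhiS g

/-- A simple morphism: one whose inversion set is a singleton. -/
def Simple {a b : G} (f : b ⟶ a) : Prop := ∃ α : R a, S.Phi f = {α}

/-- Interval finiteness: every interval `[1ₐ, g]` of a weak order is finite. -/
def IntervalFinite : Prop :=
  ∀ (a : G) (g : SHoms G a), {h : SHoms G a | S.PhiS h ⊆ S.PhiS g}.Finite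

/-- Preprincipal: interval finite, and the inversion set of an atomic morphism is
contained in, or disjoint from, any other inversion set at the same object. -/
def Preprincipal : Prop :=
  S.IntervalFinite ∧ ∀ (a : G) (s g : SHoms G a), S.Atomic s →
    S.PhiS s ⊆ S.PhiS g ∨ S.PhiS s ∩ S.PhiS g = ∅

/-- Antipodal: the weak order at each object has a maximum element. -/
def Antipodal : Prop :=
  ∀ a : G, ∃ ω : SHoms G a, ∀ g : SHoms G a, S.PhiS g ⊆ S.PhiS ω

end SGS

/-!
Among the morphisms `m ∈ ₐG` with `Φ_m ⊥ Φ_x`, `Φ_y ⊆ Φ_m`, and `Φ_m` contained in `Φ_y''` for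
every square `(x, w'', y'', z'')` with `y ≤ y''`, pick one with a largest inversion set (`y` itself
is one). With the joins `g = x ∨ m` and `h = x⁻¹ ∨ g x⁻¹`, the morphism `p = h x` is again such a
morphism and `Φ_m ⊆ Φ_g \ Φ_x ⊆ Φ_p`, so maximality gives `Φ_g \ Φ_x = Φ_m`: this is exactly the
statement that `(x, g x⁻¹, m, g m⁻¹)` is a square. Two such minimal completions lie below each
other, so they have the same inversion set and coincide by faithfulness.
-/

namespace CategoryTheory.Groupoid

variable {G : Type u} [Groupoid G] {a b c : G}

lemma inv_inv (f : a ⟶ b) : Groupoid.inv (Groupoid.inv f) = f := by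
  simp [Groupoid.inv_eq_inv]

lemma inv_comp_eq (f : a ⟶ b) (g : b ⟶ c) :
    Groupoid.inv (f ≫ g) = Groupoid.inv g ≫ Groupoid.inv f := by
  simp [Groupoid.inv_eq_inv]

end CategoryTheory.Groupoid

namespace SGS

variable {G : Type u} [Groupoid G] {R : G → Type v} (S : SGS G R)

section Roots

variable {a b : G}

lemma act_act_inv (f : b ⟶ a) (α : R a) : S.act f (S.act (Groupoid.inv f) α) = α := by
  rw [S.act_comp, Groupoid.inv_comp, S.act_id]

lemma act_inv_act (f : b ⟶ a) (β : R b) : S.act (Groupoid.inv f) (S.act f β) = β := by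
  rw [S.act_comp, Groupoid.comp_inv, S.act_id]

lemma act_inv_comp {e : G} (k : e ⟶ b) (f : b ⟶ a) (α : R a) :
    S.act (Groupoid.inv (k ≫ f)) α = S.act (Groupoid.inv k) (S.act (Groupoid.inv f) α) := by
  rw [Groupoid.inv_comp_eq, S.act_comp]

lemma mem_image_act_iff (f : b ⟶ a) (s : Set (R b)) (α : R a) :
    α ∈ S.act f '' s ↔ S.act (Groupoid.inv f) α ∈ s :=
  ⟨by rintro ⟨β, hβ, rfl⟩; rwa [S.act_inv_act], fun h => ⟨_, h, S.act_act_inv f α⟩⟩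

lemma mem_image_act_inv_iff (f : b ⟶ a) (s : Set (R a)) (β : R b) :
    β ∈ S.act (Groupoid.inv f) '' s ↔ S.act f β ∈ s := by
  rw [mem_image_act_iff, Groupoid.inv_inv]

lemma image_act_image_act_inv (f : b ⟶ a) (s : Set (R a)) :
    S.act f '' (S.act (Groupoid.inv f) '' s) = s := by
  rw [Set.image_image]; simp only [act_act_inv, Set.image_id']

lemma neg_mem_pos_iff (α : R a) : S.neg α ∈ S.pos a ↔ α ∉ S.pos a := by
  rw [S.pos_iff (S.neg α), S.neg_neg]

lemma mem_Phi {d : G} (f : d ⟶ a) (α : R a) :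
    α ∈ S.Phi f ↔ α ∈ S.pos a ∧ S.act (Groupoid.inv f) α ∉ S.pos d := Iff.rfl

lemma mem_Phi_inv_iff (f : b ⟶ a) (β : R b) :
    β ∈ S.Phi (Groupoid.inv f) ↔ β ∈ S.pos b ∧ S.act f β ∉ S.pos a := by
  simp [Phi]

lemma act_notMem_Phi (f : b ⟶ a) {β : R b} (hβ : β ∈ S.pos b) : S.act f β ∉ S.Phi f :=
  fun h => h.2 (by rwa [S.act_inv_act])

lemma neg_act_mem_Phi (f : b ⟶ a) {β : R b} (hβ : β ∈ S.pos b) (hfβ : S.act f β ∉ S.pos a) :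
    S.neg (S.act f β) ∈ S.Phi f := by
  refine ⟨(S.neg_mem_pos_iff _).2 hfβ, ?_⟩
  rw [S.act_neg, S.act_inv_act]
  exact (S.pos_iff β).1 hβ

lemma Phi_comp_inv {d : G} (x : b ⟶ a) (g : d ⟶ a) (hxg : S.Phi x ⊆ S.Phi g) :
    S.Phi (g ≫ Groupoid.inv x) = S.act (Groupoid.inv x) '' (S.Phi g \ S.Phi x) := by
  ext β
  have hact : S.act (Groupoid.inv (g ≫ Groupoid.inv x)) β = S.act (Groupoid.inv g) (S.act x β) := by
    rw [act_inv_comp, Groupoid.inv_inv]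
  rw [mem_image_act_inv_iff]
  constructor
  · rintro ⟨hβ, hgβ⟩
    rw [hact] at hgβ
    have hxβ : S.act x β ∈ S.pos a := by
      by_contra hxβ
      have := (hxg (S.neg_act_mem_Phi x hβ hxβ)).2
      rw [S.act_neg, ← S.pos_iff] at this
      exact hgβ this
    exact ⟨⟨hxβ, hgβ⟩, S.act_notMem_Phi x hβ⟩
  · rintro ⟨⟨hxβ, hgβ⟩, hβx⟩
    refine ⟨?_, by rwa [hact]⟩
    by_contra hβ
    exact hβx ⟨hxβ, by rwa [S.act_inv_act]⟩

lemma Phi_comp {e : G} (x : b ⟶ a) (k : e ⟶ b) (hk : ∀ β ∈ S.Phi k, S.act x β ∈ S.pos a) :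
    S.Phi (k ≫ x) = S.Phi x ∪ S.act x '' S.Phi k := by
  ext γ
  simp only [Set.mem_union, mem_image_act_iff, mem_Phi, act_inv_comp]
  constructor
  · rintro ⟨hγ, hkγ⟩
    by_cases hxγ : S.act (Groupoid.inv x) γ ∈ S.pos b
    · exact Or.inr ⟨hxγ, hkγ⟩
    · exact Or.inl ⟨hγ, hxγ⟩
  · rintro (⟨hγ, hxγ⟩ | ⟨hxγ, hkγ⟩)
    · refine ⟨hγ, fun hkγ => (S.pos_iff γ).1 hγ ?_⟩
      have := hk _ (S.neg_act_mem_Phi k hkγ (by rwa [S.act_act_inv]))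
      rwa [S.act_act_inv, S.act_neg, S.act_act_inv] at this
    · have := hk _ ⟨hxγ, hkγ⟩
      rw [S.act_act_inv] at this
      exact ⟨this, hkγ⟩

lemma Phi_comp_of_Phi_inv_subset {e : G} (x : b ⟶ a) (k : e ⟶ b)
    (hk : S.Phi (Groupoid.inv x) ⊆ S.Phi k) :
    S.Phi (k ≫ x) = S.act x '' (S.Phi k \ S.Phi (Groupoid.inv x)) := by
  simpa only [Groupoid.inv_inv] using S.Phi_comp_inv (Groupoid.inv x) k hk

lemma disjoint_image_act_Phi (x : b ⟶ a) {s : Set (R b)} (hs : s ⊆ S.pos b) :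
    Disjoint (S.act x '' s) (S.Phi x) := by
  rw [Set.disjoint_left]
  rintro _ ⟨β, hβ, rfl⟩
  exact S.act_notMem_Phi x (hs hβ)

end Roots

variable {S}

lemma eq_of_PhiS_eq (hfa : S.Faithful) {a : G} {p q : SHoms G a} (h : S.PhiS p = S.PhiS q) :
    p = q := by
  obtain ⟨d, f⟩ := p
  obtain ⟨e, f'⟩ := q
  have hempty : S.Phi (f ≫ Groupoid.inv f') = ∅ := by
    rw [S.Phi_comp_inv f' f h.ge, show S.Phi f = S.Phi f' from h]
    simp
  obtain ⟨rfl, hid⟩ := hfa _ hempty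
  have : f = f' := by
    simpa [Category.assoc, Groupoid.inv_comp] using congrArg (· ≫ f') hid
  rw [this]

section Joins

variable {a : G} {p q j : SHoms G a}

lemma IsLUBw.subset_left (hj : S.IsLUBw {p, q} j) : S.PhiS p ⊆ S.PhiS j :=
  hj.1 p (by simp)

lemma IsLUBw.subset_right (hj : S.IsLUBw {p, q} j) : S.PhiS q ⊆ S.PhiS j :=
  hj.1 q (by simp)

lemma IsLUBw.subset_of (hj : S.IsLUBw {p, q} j) {k : SHoms G a} (hp : S.PhiS p ⊆ S.PhiS k)
    (hq : S.PhiS q ⊆ S.PhiS k) : S.PhiS j ⊆ S.PhiS k :=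
  hj.2 k (by rintro _ (rfl | rfl) <;> assumption)

end Joins

section Squares

variable {a b c d : G} {x : b ⟶ d} {w : a ⟶ b} {y : c ⟶ d} {z : a ⟶ c}

lemma Square.Phi_comp (hsq : S.Square x w y z) : S.Phi (w ≫ x) = S.Phi x ∪ S.Phi y := by
  rw [S.Phi_comp x w fun β hβ => (hsq.2 ▸ Set.mem_image_of_mem _ hβ : S.act x β ∈ S.Phi y).1,
    hsq.2]

lemma Square.Phi_comp_inv (hsq : S.Square x w y z) :
    S.Phi (y ≫ Groupoid.inv x) = S.Phi (Groupoid.inv x) ∪ S.act (Groupoid.inv x) '' S.Phi y := by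
  refine S.Phi_comp _ y fun α hα => ?_
  rw [← hsq.2, mem_image_act_iff] at hα
  exact hα.1

end Squares

section Step

variable {a b : G} {x : b ⟶ a} {m g : SHoms G a} {h : SHoms G b}

lemma Phi_diff_subset_step (hg : S.IsLUBw {⟨b, x⟩, m} g)
    (hh : S.IsLUBw {⟨a, Groupoid.inv x⟩, ⟨g.1, g.2 ≫ Groupoid.inv x⟩} h) :
    S.PhiS g \ S.Phi x ⊆ S.Phi (h.2 ≫ x) := by
  rw [S.Phi_comp_of_Phi_inv_subset x h.2 hh.subset_left]
  intro α hα
  rw [mem_image_act_iff]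
  refine ⟨hh.subset_right ?_, fun hx => ((S.mem_Phi_inv_iff x _).1 hx).2 ?_⟩
  · rw [PhiS, S.Phi_comp_inv x g.2 hg.subset_left, mem_image_act_inv_iff, act_act_inv]
    exact hα
  · rw [act_act_inv]
    exact hα.1.1

lemma disjoint_Phi_step (hh : S.IsLUBw {⟨a, Groupoid.inv x⟩, ⟨g.1, g.2 ≫ Groupoid.inv x⟩} h) :
    Disjoint (S.Phi (h.2 ≫ x)) (S.Phi x) := by
  rw [S.Phi_comp_of_Phi_inv_subset x h.2 hh.subset_left]
  exact S.disjoint_image_act_Phi x (Set.sdiff_subset.trans fun _ hβ => hβ.1)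

lemma Phi_step_subset_of_square (hg : S.IsLUBw {⟨b, x⟩, m} g)
    (hh : S.IsLUBw {⟨a, Groupoid.inv x⟩, ⟨g.1, g.2 ≫ Groupoid.inv x⟩} h)
    {a'' c'' : G} {w'' : a'' ⟶ b} {y'' : c'' ⟶ a} {z'' : a'' ⟶ c''}
    (hsq : S.Square x w'' y'' z'') (hmy : S.PhiS m ⊆ S.Phi y'') :
    S.Phi (h.2 ≫ x) ⊆ S.Phi y'' := by
  have hgw : S.PhiS g \ S.Phi x ⊆ S.Phi y'' := by
    rw [Set.sdiff_subset_iff, ← hsq.Phi_comp]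
    refine hg.subset_of (k := ⟨a'', w'' ≫ x⟩) ?_ ?_ <;> dsimp only [PhiS] <;>
      rw [hsq.Phi_comp]
    · exact Set.subset_union_left
    · exact hmy.trans Set.subset_union_right
  have hhy : S.PhiS h \ S.Phi (Groupoid.inv x) ⊆ S.act (Groupoid.inv x) '' S.Phi y'' := by
    rw [Set.sdiff_subset_iff, ← hsq.Phi_comp_inv]
    refine hh.subset_of (k := ⟨c'', y'' ≫ Groupoid.inv x⟩) ?_ ?_ <;> dsimp only [PhiS] <;>
      rw [hsq.Phi_comp_inv]
    · exact Set.subset_union_left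
    · rw [S.Phi_comp_inv x g.2 hg.subset_left]
      exact (Set.image_mono hgw).trans Set.subset_union_right
  rw [S.Phi_comp_of_Phi_inv_subset x h.2 hh.subset_left, ← S.image_act_image_act_inv x (S.Phi y'')]
  exact Set.image_mono hhy

lemma square_of_Phi_step_subset (hg : S.IsLUBw {⟨b, x⟩, m} g)
    (hh : S.IsLUBw {⟨a, Groupoid.inv x⟩, ⟨g.1, g.2 ≫ Groupoid.inv x⟩} h)
    (hmx : Disjoint (S.PhiS m) (S.Phi x)) (hpm : S.Phi (h.2 ≫ x) ⊆ S.PhiS m) :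
    S.Square x (g.2 ≫ Groupoid.inv x) m.2 (g.2 ≫ Groupoid.inv m.2) := by
  refine ⟨by simp only [Category.assoc, Groupoid.inv_comp, Category.comp_id], ?_⟩
  have hgm : S.PhiS g \ S.Phi x = S.PhiS m :=
    ((Phi_diff_subset_step hg hh).trans hpm).antisymm
      (Set.subset_sdiff.2 ⟨hg.subset_right, hmx⟩)
  rw [S.Phi_comp_inv x g.2 hg.subset_left, S.image_act_image_act_inv]
  exact hgm

end Step

lemma exists_minimal_square (hfin : S.FiniteSGS) (hcomp : S.Complete)
    {a b c : G} (x : b ⟶ a) (y : c ⟶ a) (hxy : Disjoint (S.Phi x) (S.Phi y)) :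
    ∃ y' : SHoms G a,
      S.Phi y ⊆ S.PhiS y' ∧
      (∃ (a' : G) (w' : a' ⟶ b) (z' : a' ⟶ y'.1), S.Square x w' y'.2 z') ∧
      (∀ (a'' c'' : G) (w'' : a'' ⟶ b) (y'' : c'' ⟶ a) (z'' : a'' ⟶ c''),
        S.Square x w'' y'' z'' → S.Phi y ⊆ S.Phi y'' → S.PhiS y' ⊆ S.Phi y'') := by
  have := hfin.1
  have : ∀ d, Finite (d ⟶ a) := fun d => hfin.2.1 d a
  have := hfin.2.2 a
  let T : Set (SHoms G a) := {m | Disjoint (S.PhiS m) (S.Phi x) ∧ S.Phi y ⊆ S.PhiS m ∧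
    ∀ (a'' c'' : G) (w'' : a'' ⟶ b) (y'' : c'' ⟶ a) (z'' : a'' ⟶ c''),
      S.Square x w'' y'' z'' → S.Phi y ⊆ S.Phi y'' → S.PhiS m ⊆ S.Phi y''}
  obtain ⟨m, ⟨hmx, hym, hmin⟩, hmax⟩ := T.exists_max_image (fun m => (S.PhiS m).ncard)
    T.toFinite ⟨⟨c, y⟩, hxy.symm, subset_rfl, fun _ _ _ _ _ _ hyy => hyy⟩
  obtain ⟨g, hg⟩ := hcomp a {⟨b, x⟩, m}
  obtain ⟨h, hh⟩ := hcomp b {⟨a, Groupoid.inv x⟩, ⟨g.1, g.2 ≫ Groupoid.inv x⟩}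
  have hmp : S.PhiS m ⊆ S.Phi (h.2 ≫ x) :=
    (Set.subset_sdiff.2 ⟨hg.subset_right, hmx⟩).trans (Phi_diff_subset_step hg hh)
  have hpT : (⟨h.1, h.2 ≫ x⟩ : SHoms G a) ∈ T :=
    ⟨disjoint_Phi_step hh, hym.trans hmp,
      fun _ _ _ _ _ hsq hyy => Phi_step_subset_of_square hg hh hsq (hmin _ _ _ _ _ hsq hyy)⟩
  have hpm : S.PhiS m = S.Phi (h.2 ≫ x) := Set.eq_of_subset_of_ncard_le hmp (hmax _ hpT)
  exact ⟨m, hym, ⟨_, _, _, square_of_Phi_step_subset hg hh hmx hpm.ge⟩, hmin⟩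

end SGS

/-- in a finite, faithful, complete signed groupoid set, given
`x, y ∈ ₐG` with `Φ_x ∩ Φ_y = ∅`, there is a unique `y' ∈ ₐG` with `y ≤ y'`,
forming a square `(x, w', y', z')`, and minimal with these properties. -/
theorem stmt_11 {G : Type u} [Groupoid G] {R : G → Type v} (S : SGS G R)
    (hfin : S.FiniteSGS) (hfa : S.Faithful) (hcomp : S.Complete)
    {a b c : G} (x : b ⟶ a) (y : c ⟶ a) (hxy : S.Phi x ∩ S.Phi y = ∅) :
    ∃! y' : SHoms G a,
      S.Phi y ⊆ S.PhiS y' ∧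
      (∃ (a' : G) (w' : a' ⟶ b) (z' : a' ⟶ y'.1), S.Square x w' y'.2 z') ∧
      (∀ (a'' c'' : G) (w'' : a'' ⟶ b) (y'' : c'' ⟶ a) (z'' : a'' ⟶ c''),
        S.Square x w'' y'' z'' → S.Phi y ⊆ S.Phi y'' → S.PhiS y' ⊆ S.Phi y'') := by
  obtain ⟨y', hy', hsq', hmin'⟩ :=
    S.exists_minimal_square hfin hcomp x y (Set.disjoint_iff_inter_eq_empty.2 hxy)
  refine ⟨y', ⟨hy', hsq', hmin'⟩, ?_⟩
  rintro y₁ ⟨hy₁, ⟨_, _, _, hsq₁⟩, hmin₁⟩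
  obtain ⟨_, _, _, hsq'⟩ := hsq'
  exact SGS.eq_of_PhiS_eq hfa ((hmin₁ _ _ _ _ _ hsq' hy').antisymm (hmin' _ _ _ _ _ hsq₁ hy₁))
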